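/- arXiv:2203.09800 — 3 statements merged into one kernel-verified Lean document; each statement's English description precedes it below -/
import Mathlib

section
/- For any subset K of jobs scheduled on a single machine, every feasible schedule has maximum lateness at least min_{i∈K} r_i + (sum of processing times of jobs in K) - max_{i∈K} d_i. -/
lemma stmt_1_key (n : ℕ) (r p : Fin n → ℤ) (hp : ∀ j, 0 < p j)
    (s : Fin n → ℤ) (hrel : ∀ j, r j ≤ s j)
    (hnov : ∀ i j, i ≠ j → s i + p i ≤ s j ∨ s j + p j ≤ s i) :
    ∀ (K : Finset (Fin n)) (hK : K.Nonempty),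
      ∃ j ∈ K, K.inf' hK r + ∑ i ∈ K, p i ≤ s j + p j := by
  intro K
  induction K using Finset.strongInduction with
  | _ K ih =>
    intro hK
    obtain ⟨m, hm, hmax⟩ := K.exists_max_image (fun j => s j + p j) hK
    by_cases hE : (K.erase m).Nonempty
    · obtain ⟨j, hj, hle⟩ := ih (K.erase m) (K.erase_ssubset hm) hE
      have hjm : j ≠ m := Finset.ne_of_mem_erase hj
      have hjK : j ∈ K := Finset.mem_of_mem_erase hj
      have hCj : s j + p j ≤ s m := by
        rcases hnov j m hjm with h | h
        · exact h
        · exfalso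
          have h1 := hmax j hjK
          have := hp j
          omega
      refine ⟨m, hm, ?_⟩
      have hsum : ∑ i ∈ K.erase m, p i + p m = ∑ i ∈ K, p i :=
        Finset.sum_erase_add K p hm
      have hinf : K.inf' hK r ≤ (K.erase m).inf' hE r := by
        obtain ⟨i, hi, hieq⟩ := Finset.exists_mem_eq_inf' hE r
        rw [hieq]
        exact Finset.inf'_le r (Finset.mem_of_mem_erase hi)
      omega
    · have hKm : K = {m} := by
        rw [Finset.not_nonempty_iff_eq_empty] at hE
        have := Finset.erase_eq_empty_iff (s := K) (a := m) |>.mp hE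
        rcases this with h | h
        · exact absurd hm (by simp [h])
        · exact h
      subst hKm
      refine ⟨m, by simp, ?_⟩
      simp only [Finset.inf'_singleton, Finset.sum_singleton]
      have := hrel m
      omega


/-- For any subset `K` of jobs scheduled on a single machine, every
feasible schedule has maximum lateness at least
`min_{i∈K} r i + (∑_{i∈K} p i) - max_{i∈K} d i`. -/
theorem stmt_1 (n : ℕ) (r p d : Fin n → ℤ) (hp : ∀ j, 0 < p j)
    (K : Finset (Fin n)) (hK : K.Nonempty)
    (s : Fin n → ℤ)
    (hrel : ∀ j, r j ≤ s j)
    (hnov : ∀ i j, i ≠ j → s i + p i ≤ s j ∨ s j + p j ≤ s i) :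
    K.inf' hK r + (∑ i ∈ K, p i) - K.sup' hK d ≤
      Finset.univ.sup' ⟨hK.choose, Finset.mem_univ _⟩ (fun j => s j + p j - d j) := by
  obtain ⟨j, hj, hle⟩ := stmt_1_key n r p hp s hrel hnov K hK
  have hd : d j ≤ K.sup' hK d := Finset.le_sup' d hj
  have hsup : s j + p j - d j ≤
      Finset.univ.sup' ⟨hK.choose, Finset.mem_univ _⟩ (fun j => s j + p j - d j) :=
    by simpa using Finset.le_sup' (fun j => s j + p j - d j) (Finset.mem_univ j)
  omega
end

section
/- If in a feasible single-machine schedule S a set K of jobs is processed consecutively without idle time, the first job of K starts exactly at time min_{i∈K} r_i, all jobs of K have due date at most d_o where o is the last job of K and o attains the maximum lateness of S, and the jobs of K appear in nondecreasing order of due dates, then S has minimum possible maximum lateness among all feasible schedules. -/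
/-! Since `K` runs without idle time from `min_{i∈K} r i`, the last job `o` of `K` completes
at `min_{i∈K} r i + ∑_{i∈K} p i`. In any feasible schedule the job of `K` that starts last
completes no earlier than that, and its due date is at most `d o`, so it is at least as
late as `o`, whose lateness is the maximum lateness of `S`. -/

theorem List.IsChain.getLast_add_eq_head_add_sum {α M : Type*} [AddCommMonoid M]
    {s p : α → M} : ∀ {L : List α} (hL : L ≠ []), L.IsChain (fun a b => s b = s a + p a) →
      s (L.getLast hL) + p (L.getLast hL) = s (L.head hL) + (L.map p).sum
  | [_], _, _ => by simp
  | a :: b :: l, _, h => by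
    rw [List.isChain_cons_cons] at h
    have ih := getLast_add_eq_head_add_sum (List.cons_ne_nil b l) h.2
    simp only [List.getLast_cons_cons, ih, List.head_cons, h.1, List.map_cons, List.sum_cons,
      add_assoc]

section Schedule

variable {α : Type*} {r p s : α → ℤ}

theorem completion_le_start_of_start_le (hp : ∀ j, 0 < p j)
    (hnov : ∀ i j, i ≠ j → s i + p i ≤ s j ∨ s j + p j ≤ s i) {i j : α} (hij : i ≠ j)
    (hle : s i ≤ s j) : s i + p i ≤ s j :=
  (hnov i j hij).resolve_right fun h => by linarith [hp j]

theorem exists_inf'_add_sum_le_completion [DecidableEq α] (hp : ∀ j, 0 < p j)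
    (hrel : ∀ j, r j ≤ s j) (hnov : ∀ i j, i ≠ j → s i + p i ≤ s j ∨ s j + p j ≤ s i)
    {K : Finset α} (hK : K.Nonempty) : ∃ u ∈ K, K.inf' hK r + ∑ i ∈ K, p i ≤ s u + p u := by
  induction hK using Finset.Nonempty.strong_induction with
  | h₀ a => exact ⟨a, Finset.mem_singleton_self a, by simpa using hrel a⟩
  | @h₁ K hK ih =>
    obtain ⟨u, hu, hu_max⟩ := K.exists_max_image s hK.nonempty
    have hK' := hK.erase_nonempty (a := u)
    obtain ⟨v, hv, hv_bound⟩ := ih _ hK' (Finset.erase_ssubset hu)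
    have hvu : s v + p v ≤ s u :=
      completion_le_start_of_start_le hp hnov (Finset.ne_of_mem_erase hv)
        (hu_max v (Finset.mem_of_mem_erase hv))
    have hinf : K.inf' hK.nonempty r ≤ (K.erase u).inf' hK' r :=
      Finset.inf'_mono r (Finset.erase_subset u K) hK'
    refine ⟨u, hu, ?_⟩
    rw [← Finset.add_sum_erase K p hu]
    linarith

end Schedule

theorem stmt_2_general (n : ℕ) (r p d s : Fin n → ℤ) (hp : ∀ j, 0 < p j)
    -- the jobs of K, listed in processing order
    (L : List (Fin n)) (hLne : L ≠ []) (hnd : L.Nodup)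
    (K : Finset (Fin n)) (hKL : K = L.toFinset) (hK : K.Nonempty)
    -- consecutive processing without idle time
    (hconsec : L.Chain' (fun a b => s b = s a + p a))
    -- the first job of K starts exactly at min_{i∈K} r i
    (hstart : s (L.head hLne) = K.inf' hK r)
    -- o is the last job of K
    (o : Fin n) (ho : o = L.getLast hLne)
    -- all jobs of K have due date at most d o
    (hdue : ∀ i ∈ K, d i ≤ d o)
    -- o attains the maximum lateness of S
    (hmax : ∀ j, s j + p j - d j ≤ s o + p o - d o) :
    ∀ s' : Fin n → ℤ, (∀ j, r j ≤ s' j) →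
      (∀ i j, i ≠ j → s' i + p i ≤ s' j ∨ s' j + p j ≤ s' i) →
      Finset.univ.sup' ⟨o, Finset.mem_univ _⟩ (fun j => s j + p j - d j) ≤
        Finset.univ.sup' ⟨o, Finset.mem_univ _⟩ (fun j => s' j + p j - d j) := by
  intro s' hrel' hnov'
  subst hKL
  have hcompletion : s o + p o = L.toFinset.inf' hK r + ∑ i ∈ L.toFinset, p i := by
    rw [ho, List.IsChain.getLast_add_eq_head_add_sum hLne hconsec, hstart,
      List.sum_toFinset p hnd]
  obtain ⟨u, hu, hu_completion⟩ := exists_inf'_add_sum_le_completion hp hrel' hnov' hK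
  calc Finset.univ.sup' _ (fun j => s j + p j - d j)
      ≤ s o + p o - d o := Finset.sup'_le _ _ fun j _ => hmax j
    _ ≤ s' u + p u - d u := by linarith [hdue u hu]
    _ ≤ Finset.univ.sup' _ (fun j => s' j + p j - d j) :=
      Finset.le_sup' (fun j => s' j + p j - d j) (Finset.mem_univ u)

/-- If in a feasible single-machine schedule `S` a set `K` of jobs is
processed consecutively without idle time, the first job of `K` starts exactly at
`min_{i∈K} r i`, all jobs of `K` have due date at most `d o` where `o` is the last
job of `K` and `o` attains the maximum lateness of `S`, and the jobs of `K` appear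
in nondecreasing order of due dates, then `S` has minimum possible maximum lateness
among all feasible schedules. -/
theorem stmt_2 (n : ℕ) (r p d s : Fin n → ℤ) (hp : ∀ j, 0 < p j)
    (hrel : ∀ j, r j ≤ s j)
    (hnov : ∀ i j, i ≠ j → s i + p i ≤ s j ∨ s j + p j ≤ s i)
    -- the jobs of K, listed in processing order
    (L : List (Fin n)) (hLne : L ≠ []) (hnd : L.Nodup)
    (K : Finset (Fin n)) (hKL : K = L.toFinset) (hK : K.Nonempty)
    -- consecutive processing without idle time
    (hconsec : L.Chain' (fun a b => s b = s a + p a))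
    -- no other job runs in between
    (hbetween : ∀ j, j ∉ K → ∀ a ∈ K, s j + p j ≤ s a ∨ s a + p a ≤ s j)
    -- the first job of K starts exactly at min_{i∈K} r i
    (hstart : s (L.head hLne) = K.inf' hK r)
    -- o is the last job of K
    (o : Fin n) (ho : o = L.getLast hLne)
    -- all jobs of K have due date at most d o
    (hdue : ∀ i ∈ K, d i ≤ d o)
    -- o attains the maximum lateness of S
    (hmax : ∀ j, s j + p j - d j ≤ s o + p o - d o)
    -- the jobs of K appear in nondecreasing order of due dates
    (hsorted : L.Chain' (fun a b => d a ≤ d b)) :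
    ∀ s' : Fin n → ℤ, (∀ j, r j ≤ s' j) →
      (∀ i j, i ≠ j → s' i + p i ≤ s' j ∨ s' j + p j ≤ s' i) →
      Finset.univ.sup' ⟨o, Finset.mem_univ _⟩ (fun j => s j + p j - d j) ≤
        Finset.univ.sup' ⟨o, Finset.mem_univ _⟩ (fun j => s' j + p j - d j) :=
  stmt_2_general n r p d s hp L hLne hnd K hKL hK hconsec hstart o ho hdue hmax
end

section
/- For a set of jobs all released at time 0 and scheduled consecutively without idle time starting at time 0 on a single machine, the sequence in nondecreasing order of due dates minimizes the maximum lateness over all permutations (Jackson's rule). -/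
/-- Jackson's rule: For a set of jobs all released at time 0 and
scheduled consecutively without idle time starting at time 0 on a single machine,
the sequence in nondecreasing order of due dates minimizes the maximum lateness
over all permutations. -/
theorem stmt_4 (n : ℕ) (hn : 0 < n) (p d : Fin n → ℤ) (hp : ∀ j, 0 < p j)
    (π : Equiv.Perm (Fin n)) (hsorted : Monotone (fun k => d (π k))) :
    ∀ ρ : Equiv.Perm (Fin n),
      Finset.univ.sup' ⟨⟨0, hn⟩, Finset.mem_univ _⟩
          (fun k => (∑ l ∈ Finset.Iic k, p (π l)) - d (π k)) ≤
        Finset.univ.sup' ⟨⟨0, hn⟩, Finset.mem_univ _⟩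
          (fun k => (∑ l ∈ Finset.Iic k, p (ρ l)) - d (ρ k)) := by
  intro ρ
  apply Finset.sup'_le
  intro k _
  set S : Finset (Fin n) := (Finset.Iic k).image π with hS
  set T : Finset (Fin n) := Finset.univ.filter (fun i => ρ i ∈ S) with hT
  have hTne : T.Nonempty := by
    refine ⟨ρ.symm (π k), ?_⟩
    simp only [hT, Finset.mem_filter, Finset.mem_univ, true_and, Equiv.apply_symm_apply,
      hS, Finset.mem_image]
    exact ⟨k, Finset.mem_Iic.mpr le_rfl, rfl⟩
  set m := T.max' hTne with hm
  have hmT : m ∈ T := T.max'_mem hTne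
  have hρm : ρ m ∈ S := (Finset.mem_filter.mp hmT).2
  obtain ⟨l0, hl0, hl0e⟩ := Finset.mem_image.mp hρm
  have hd : d (ρ m) ≤ d (π k) := by
    rw [← hl0e]; exact hsorted (Finset.mem_Iic.mp hl0)
  have hsum : (∑ l ∈ Finset.Iic k, p (π l)) ≤ ∑ l ∈ Finset.Iic m, p (ρ l) := by
    have e1 : ∑ j ∈ S, p j = ∑ l ∈ Finset.Iic k, p (π l) :=
      Finset.sum_image fun a _ b _ h => π.injective h
    have e2 : ∑ j ∈ (Finset.Iic m).image ρ, p j = ∑ l ∈ Finset.Iic m, p (ρ l) :=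
      Finset.sum_image fun a _ b _ h => ρ.injective h
    rw [← e1, ← e2]
    apply Finset.sum_le_sum_of_subset_of_nonneg
    · intro j hj
      have hjT : ρ.symm j ∈ T := by
        simp only [hT, Finset.mem_filter, Finset.mem_univ, true_and, Equiv.apply_symm_apply]
        exact hj
      exact Finset.mem_image.mpr ⟨ρ.symm j, Finset.mem_Iic.mpr (T.le_max' _ hjT), by simp⟩
    · intro j _ _; exact (hp j).le
  exact le_trans (sub_le_sub hsum hd) (Finset.le_sup' (f := fun k => (∑ l ∈ Finset.Iic k, p (ρ l)) - d (ρ k)) (Finset.mem_univ m))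
end
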